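/- arXiv:math/0306239 — 3 statements merged into one kernel-verified Lean document; each statement's English description precedes it below -/
import Mathlib

section
/- Let s, q, k > 0, let f be C¹, and φ : ℝ → ℝ nonnegative. With F(u,z) = f(u) − f(u₊) − s(u − u₊) − s q(z − 1) and G(u,z) = (k/s) φ(u) z, at any point with z > 0 and φ(u) > 0, the determinant det [[F, ∂F/∂s],[G, ∂G/∂s]] equals (−G/s)(2F − (f(u) − f(u₊))). Consequently, if in addition F ≤ 0 and f(u) > f(u₊), this determinant is strictly positive. -/
/-!
In `s`, `F - (f u - f u₊)` is homogeneous of degree one and `G` of degree minus one, so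
`∂F/∂s = (F - (f u - f u₊)) / s` and `∂G/∂s = -G / s`. Substituting these into the determinant
gives `(-G/s) (2F - (f u - f u₊))`; when `F ≤ 0 < f u - f u₊` both factors are negative.
-/

theorem deriv_const_add_mul_eq_div (c b : ℝ) {s : ℝ} (hs : s ≠ 0) :
    deriv (fun t => c + t * b) s = (c + s * b - c) / s := by
  rw [deriv_const_add, deriv_mul_const_field, deriv_id'', one_mul]
  field_simp
  ring

theorem deriv_div_eq_neg_div (a : ℝ) {s : ℝ} (hs : s ≠ 0) :
    deriv (fun t => a / t) s = -(a / s) / s := by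
  simp only [div_eq_mul_inv, deriv_const_mul_field', deriv_inv]
  field_simp

theorem stmt_5_general (s q k up : ℝ) (hs : 0 < s) (hk : 0 < k)
    (f : ℝ → ℝ)
    (φ : ℝ → ℝ)
    (F G : ℝ → ℝ → ℝ → ℝ)
    (hF : ∀ s' u z, F s' u z = f u - f up - s' * (u - up) - s' * q * (z - 1))
    (hG : ∀ s' u z, G s' u z = (k / s') * φ u * z)
    (u z : ℝ) (hz : 0 < z) (hφu : 0 < φ u) :
    Matrix.det !![F s u z, deriv (fun s' : ℝ => F s' u z) s;
                  G s u z, deriv (fun s' : ℝ => G s' u z) s]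
      = (-(G s u z) / s) * (2 * F s u z - (f u - f up)) ∧
    (F s u z ≤ 0 → f up < f u →
      0 < Matrix.det !![F s u z, deriv (fun s' : ℝ => F s' u z) s;
                        G s u z, deriv (fun s' : ℝ => G s' u z) s]) := by
  have hFs : (fun s' => F s' u z) = fun s' => (f u - f up) + s' * (-(u - up) - q * (z - 1)) :=
    funext fun s' => by rw [hF]; ring
  have hGs : (fun s' => G s' u z) = fun s' => k * φ u * z / s' :=
    funext fun s' => by rw [hG]; ring
  have hdF : deriv (fun s' => F s' u z) s = (F s u z - (f u - f up)) / s := by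
    rw [hFs, deriv_const_add_mul_eq_div _ _ hs.ne', hF]
    ring
  have hdG : deriv (fun s' => G s' u z) s = -G s u z / s := by
    rw [hGs, deriv_div_eq_neg_div _ hs.ne', hG]
    ring
  have hdet : Matrix.det !![F s u z, deriv (fun s' : ℝ => F s' u z) s;
                  G s u z, deriv (fun s' : ℝ => G s' u z) s]
      = (-(G s u z) / s) * (2 * F s u z - (f u - f up)) := by
    rw [Matrix.det_fin_two_of, hdF, hdG]
    ring
  refine ⟨hdet, fun hFle hflt => ?_⟩
  have hGpos : 0 < G s u z := by rw [hG]; positivity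
  rw [hdet]
  exact mul_pos_of_neg_of_neg (div_neg_of_neg_of_pos (neg_neg_iff_pos.mpr hGpos) hs) (by linarith)

/-- Monotonicity in `s` \eqnref{deltas}: with `F(s,u,z) = f(u) − f(u₊) − s(u − u₊)
− s q(z − 1)` and `G(s,u,z) = (k/s) φ(u) z`, at a point with `z > 0`, `φ(u) > 0`,
`det [[F, ∂F/∂s],[G, ∂G/∂s]] = (−G/s)(2F − (f(u) − f(u₊)))`; if moreover `F ≤ 0`
and `f(u) > f(u₊)`, this determinant is strictly positive. -/
theorem stmt_5 (s q k up : ℝ) (hs : 0 < s) (hq : 0 < q) (hk : 0 < k)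
    (f : ℝ → ℝ) (hf : ContDiff ℝ 1 f)
    (φ : ℝ → ℝ) (hφ : ∀ u, 0 ≤ φ u)
    (F G : ℝ → ℝ → ℝ → ℝ)
    (hF : ∀ s' u z, F s' u z = f u - f up - s' * (u - up) - s' * q * (z - 1))
    (hG : ∀ s' u z, G s' u z = (k / s') * φ u * z)
    (u z : ℝ) (hz : 0 < z) (hφu : 0 < φ u) :
    Matrix.det !![F s u z, deriv (fun s' : ℝ => F s' u z) s;
                  G s u z, deriv (fun s' : ℝ => G s' u z) s]
      = (-(G s u z) / s) * (2 * F s u z - (f u - f up)) ∧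
    (F s u z ≤ 0 → f up < f u →
      0 < Matrix.det !![F s u z, deriv (fun s' : ℝ => F s' u z) s;
                        G s u z, deriv (fun s' : ℝ => G s' u z) s]) :=
  stmt_5_general s q k up hs hk f φ F G hF hG u z hz hφu
end

section
/- Let w : [0,∞) → (−∞, 0) solve w' = ψ(|w|), where ψ ≥ 0 is continuous and, for every n ≥ 2, ψ(h) ≤ h^n for all sufficiently small h > 0; suppose w < 0 and w(t) → 0 as t → ∞. Then |w(t)| decays slower than any algebraic rate: for every α > 0, t^α |w(t)| → ∞ as t → ∞. -/
open Filter

/-- Subalgebraic decay: if `w < 0` solves `w' = ψ(|w|)` on `[0,∞)` with `ψ ≥ 0`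
continuous and `ψ(h) ≤ hⁿ` for small `h > 0` for every `n ≥ 2`, and `w(t) → 0` as
`t → ∞`, then `w` decays slower than any algebraic rate: for every `α > 0`,
`t^α |w(t)| → ∞` as `t → ∞`. -/
theorem stmt_9 (ψ : ℝ → ℝ) (hψc : Continuous ψ) (hψ0 : ∀ h : ℝ, 0 ≤ ψ h)
    (hψsmall : ∀ n : ℕ, 2 ≤ n → ∃ δ > (0:ℝ), ∀ h : ℝ, 0 < h → h < δ → ψ h ≤ h ^ n)
    (w : ℝ → ℝ)
    (hw' : ∀ t : ℝ, 0 ≤ t → HasDerivAt w (ψ |w t|) t)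
    (hwneg : ∀ t : ℝ, 0 ≤ t → w t < 0)
    (hwlim : Tendsto w atTop (nhds 0)) :
    ∀ α : ℝ, 0 < α → Tendsto (fun t : ℝ => t ^ α * |w t|) atTop atTop := by
  intro α hα
  set v : ℝ → ℝ := fun t => -w t with hv_def
  have hvpos : ∀ t : ℝ, 0 ≤ t → 0 < v t := fun t ht => neg_pos.2 (hwneg t ht)
  have habs : ∀ t : ℝ, 0 ≤ t → |w t| = v t := fun t ht => abs_of_neg (hwneg t ht)
  have hv' : ∀ t : ℝ, 0 ≤ t → HasDerivAt v (-(ψ (v t))) t := by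
    intro t ht
    have := (hw' t ht).neg
    rwa [habs t ht] at this
  -- choose n with 1/(n-1) < α
  obtain ⟨n, hn2, hβα⟩ : ∃ n : ℕ, 2 ≤ n ∧ 1 / ((n : ℝ) - 1) < α := by
    obtain ⟨k, hk⟩ := exists_nat_gt (1 / α)
    refine ⟨k + 2, le_add_self, ?_⟩
    have h2 : (0 : ℝ) < (k : ℝ) + 1 := by positivity
    have h1 : (1 : ℝ) < ((k : ℝ) + 1) * α := by
      rw [div_lt_iff₀ hα] at hk
      nlinarith
    have h3 : ((k + 2 : ℕ) : ℝ) - 1 = (k : ℝ) + 1 := by push_cast; ring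
    rw [h3, div_lt_iff₀ h2]
    linarith
  set p : ℕ := n - 1 with hp_def
  have hp1 : 1 ≤ p := by omega
  have hpn : p + 1 = n := by omega
  have hpR : (p : ℝ) = (n : ℝ) - 1 := by
    have : ((p + 1 : ℕ) : ℝ) = (n : ℝ) := by rw [hpn]
    push_cast at this; linarith
  have hpRpos : (0 : ℝ) < (p : ℝ) := by exact_mod_cast hp1
  set β : ℝ := 1 / (p : ℝ) with hβ_def
  have hβpos : 0 < β := by positivity
  have hβα' : β < α := by rw [hβ_def, hpR]; exact hβα
  obtain ⟨δ, hδ, hψn⟩ := hψsmall n hn2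
  have hvlim : Tendsto v atTop (nhds 0) := by simpa [hv_def] using hwlim.neg
  obtain ⟨T₀, hT₀⟩ := eventually_atTop.1 (hvlim.eventually (gt_mem_nhds hδ))
  set T : ℝ := max T₀ 1 with hT_def
  have hT1 : (1 : ℝ) ≤ T := le_max_right _ _
  have hTpos : (0 : ℝ) < T := lt_of_lt_of_le one_pos hT1
  have hvδ : ∀ t : ℝ, T ≤ t → v t < δ := fun t ht => hT₀ t ((le_max_left _ _).trans ht)
  set g : ℝ → ℝ := fun t => (v t) ^ (-(p : ℤ)) with hg_def
  set F : ℝ → ℝ := fun t => g t - (p : ℝ) * t with hF_def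
  -- derivative of F
  have hF' : ∀ t : ℝ, 0 < t →
      HasDerivAt F (((-(p : ℤ)) : ℝ) * (v t) ^ ((-(p : ℤ)) - 1) * (-(ψ (v t))) - (p : ℝ)) t := by
    intro t ht
    have hgd : HasDerivAt g (((-(p : ℤ)) : ℝ) * (v t) ^ ((-(p : ℤ)) - 1) * (-(ψ (v t)))) t := by
      have := (hasDerivAt_zpow (-(p : ℤ)) (v t) (Or.inl (ne_of_gt (hvpos t ht.le)))).comp t
        (hv' t ht.le)
      simpa [hg_def, Function.comp_def] using this
    simpa [hF_def, Pi.sub_def] using hgd.sub ((hasDerivAt_id t).const_mul (p : ℝ))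
  have hderivF : ∀ t : ℝ, T ≤ t → deriv F t ≤ 0 := by
    intro t ht
    have htpos : 0 < t := lt_of_lt_of_le hTpos ht
    have h := hF' t htpos
    rw [h.deriv]
    have hvt : 0 < v t := hvpos t htpos.le
    have hψle : ψ (v t) ≤ (v t) ^ n := hψn (v t) hvt (hvδ t ht)
    have key : ((-(p : ℤ)) : ℝ) * (v t) ^ ((-(p : ℤ)) - 1) * (-(ψ (v t)))
        = (p : ℝ) * ((v t) ^ ((-(n : ℤ))) * ψ (v t)) := by
      have : (-(p : ℤ)) - 1 = -(n : ℤ) := by omega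
      rw [this]; push_cast; ring
    rw [key]
    have hzle : (v t) ^ ((-(n : ℤ))) * ψ (v t) ≤ 1 := by
      rw [zpow_neg, zpow_natCast]
      have hpow : (0 : ℝ) < (v t) ^ n := pow_pos hvt n
      calc ((v t) ^ n)⁻¹ * ψ (v t) ≤ ((v t) ^ n)⁻¹ * (v t) ^ n :=
            mul_le_mul_of_nonneg_left hψle (inv_nonneg.2 hpow.le)
        _ = 1 := inv_mul_cancel₀ hpow.ne'
    nlinarith
  -- F antitone on Ici T
  have hFanti : AntitoneOn F (Set.Ici T) := by
    apply antitoneOn_of_deriv_nonpos (convex_Ici T)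
    · intro t ht
      exact ((hF' t (lt_of_lt_of_le hTpos ht)).differentiableAt).continuousAt.continuousWithinAt
    · intro t ht
      rw [interior_Ici] at ht
      exact ((hF' t (lt_trans hTpos ht)).differentiableAt).differentiableWithinAt
    · intro t ht
      rw [interior_Ici] at ht
      exact hderivF t (le_of_lt ht)
  set K : ℝ := g T + (p : ℝ) with hK_def
  have hgTpos : 0 < g T := by
    rw [hg_def]
    exact zpow_pos (hvpos T hTpos.le) _
  have hKpos : 0 < K := by positivity
  -- bound: for t ≥ T, g t ≤ K * t
  have hgle : ∀ t : ℝ, T ≤ t → g t ≤ K * t := by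
    intro t ht
    have h := hFanti (Set.self_mem_Ici) (Set.mem_Ici.2 ht) ht
    have h1t : (1 : ℝ) ≤ t := hT1.trans ht
    have hTt : T ≤ t := ht
    simp only [hF_def] at h
    have : g t ≤ g T + (p : ℝ) * (t - T) := by linarith
    have hgT : g T ≤ g T * t := le_mul_of_one_le_right hgTpos.le h1t
    have hpt : (p : ℝ) * (t - T) ≤ (p : ℝ) * t := by nlinarith
    calc g t ≤ g T + (p : ℝ) * (t - T) := this
      _ ≤ g T * t + (p : ℝ) * t := by linarith
      _ = K * t := by rw [hK_def]; ring
  -- lower bound on v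
  have hvlb : ∀ t : ℝ, T ≤ t → K ^ (-β) * t ^ (-β) ≤ v t := by
    intro t ht
    have htpos : 0 < t := lt_of_lt_of_le hTpos ht
    have hvt : 0 < v t := hvpos t htpos.le
    have hKt : 0 < K * t := by positivity
    have h1 : (K * t)⁻¹ ≤ (v t) ^ p := by
      have hg : g t = ((v t) ^ p)⁻¹ := by simp only [hg_def, zpow_neg, zpow_natCast]
      have hgt : 0 < g t := by rw [hg]; positivity
      have := hgle t ht
      rw [hg] at this hgt
      calc (K * t)⁻¹ ≤ (((v t) ^ p)⁻¹)⁻¹ := inv_anti₀ hgt this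
        _ = (v t) ^ p := inv_inv _
    have h2 : ((K * t)⁻¹) ^ β ≤ ((v t) ^ p : ℝ) ^ β :=
      Real.rpow_le_rpow (by positivity) h1 hβpos.le
    have h3 : ((v t) ^ p : ℝ) ^ β = v t := by
      rw [← Real.rpow_natCast (v t) p, ← Real.rpow_mul hvt.le, hβ_def,
        mul_one_div, div_self (ne_of_gt hpRpos), Real.rpow_one]
    have h4 : ((K * t)⁻¹) ^ β = K ^ (-β) * t ^ (-β) := by
      rw [Real.rpow_neg hKpos.le, Real.rpow_neg htpos.le, mul_inv,
        Real.mul_rpow (by positivity) (by positivity), Real.inv_rpow hKpos.le,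
        Real.inv_rpow htpos.le]
    rw [h3] at h2
    rw [← h4]
    exact h2
  -- conclude
  have hmain : Tendsto (fun t : ℝ => K ^ (-β) * t ^ (α - β)) atTop atTop := by
    have h := tendsto_rpow_atTop (sub_pos.2 hβα')
    exact h.const_mul_atTop (Real.rpow_pos_of_pos hKpos _)
  apply tendsto_atTop_mono' atTop ?_ hmain
  filter_upwards [eventually_ge_atTop T] with t ht
  have htpos : 0 < t := lt_of_lt_of_le hTpos ht
  rw [habs t htpos.le]
  have := hvlb t ht
  have hta : 0 < t ^ α := Real.rpow_pos_of_pos htpos α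
  calc K ^ (-β) * t ^ (α - β) = t ^ α * (K ^ (-β) * t ^ (-β)) := by
        rw [show α - β = α + (-β) by ring, Real.rpow_add htpos]; ring
    _ ≤ t ^ α * v t := by nlinarith [Real.rpow_pos_of_pos hKpos (-β), Real.rpow_pos_of_pos htpos (-β)]
end

section
/- Let D : Ω → ℂ be analytic on an open connected set Ω ⊆ ℂ containing the closed right half-plane {Re λ ≥ 0}, satisfying the complex symmetry D(conj λ) = conj(D(λ)). Suppose D has finitely many zeros in {Re λ > 0}, all contained in a bounded set, that D(λ) ≠ 0 for real λ ≥ R, that D(0) = 0 with D'(0) ≠ 0, and D has no zeros on the imaginary axis other than 0. If sgn(D'(0) · D(R)) > 0 for large real R, then the number of zeros of D (counted with multiplicity) in {Re λ > 0} is even. -/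
open Complex Filter Topology Finset
open scoped ComplexConjugate ComplexOrder

/-!
Divide out the zeros: `D z = z * ∏ w, (z - w) ^ m w * g z`, the product over the zeros `w` of
the open right half-plane with their multiplicities `m w`, and `g` analytic and zero-free on the
closed half-plane. Conjugate symmetry makes the zeros and multiplicities conjugation invariant,
so `∏ w, (w * (R - w)) ^ m w > 0` once `R` exceeds every `re w` (real zeros give positive
factors, the others pair up into `|·|²`); and it makes `g` real on `[0, ∞)`, where it therefore
keeps its sign. Hence `D'(0) * D(R) = (-1) ^ N * R * ∏ w, (w * (R - w)) ^ m w * g 0 * g R`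
has the sign of `(-1) ^ N`, where `N = ∑ w, m w`.
-/

section Factorization

variable {𝕜 : Type*} [NontriviallyNormedField 𝕜] {f : 𝕜 → 𝕜} {s : Set 𝕜}

theorem AnalyticOnNhd.exists_eq_sub_pow_mul {a : 𝕜} {n : ℕ} (hf : AnalyticOnNhd 𝕜 f s)
    (ha : a ∈ s) (hn : (n : ℕ∞) ≤ analyticOrderAt f a) :
    ∃ g, AnalyticOnNhd 𝕜 g s ∧ ∀ z, f z = (z - a) ^ n * g z := by
  classical
  obtain ⟨h, hh, hfh⟩ := (natCast_le_analyticOrderAt (hf a ha)).1 hn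
  set g := Function.update (fun z => f z / (z - a) ^ n) a (h a)
  have hgh : g =ᶠ[𝓝 a] h := by
    refine eventuallyEq_nhds_of_eventuallyEq_nhdsNE ?_ (by simp [g])
    filter_upwards [hfh.filter_mono nhdsWithin_le_nhds, self_mem_nhdsWithin] with z hz hza
    simp only [g, Function.update_of_ne (Set.mem_compl_singleton_iff.1 hza), hz, smul_eq_mul]
    exact mul_div_cancel_left₀ _ (pow_ne_zero _ (sub_ne_zero.2 hza))
  refine ⟨g, fun b hb => ?_, fun z => ?_⟩
  · rcases eq_or_ne b a with rfl | hba
    · exact hh.congr hgh.symm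
    · have hpow : AnalyticAt 𝕜 (fun z => (z - a) ^ n) b := by fun_prop
      refine ((hf b hb).div hpow (pow_ne_zero _ (sub_ne_zero.2 hba))).congr ?_
      filter_upwards [eventually_ne_nhds hba] with z hz
      simp [g, hz]
  · rcases eq_or_ne z a with rfl | hza
    · simpa [g] using hfh.self_of_nhds
    · simp [g, hza, mul_div_cancel₀ _ (pow_ne_zero _ (sub_ne_zero.2 hza))]

theorem AnalyticOnNhd.exists_eq_prod_mul (hf : AnalyticOnNhd 𝕜 f s) (F : Finset 𝕜)
    (hFs : ↑F ⊆ s) (m : 𝕜 → ℕ) (hm : ∀ w ∈ F, (m w : ℕ∞) ≤ analyticOrderAt f w) :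
    ∃ g, AnalyticOnNhd 𝕜 g s ∧ ∀ z, f z = (∏ w ∈ F, (z - w) ^ m w) * g z := by
  classical
  induction F using Finset.induction_on generalizing f with
  | empty => exact ⟨f, hf, by simp⟩
  | insert a F haF ih =>
    obtain ⟨g₁, hg₁, hfg₁⟩ :=
      hf.exists_eq_sub_pow_mul (hFs (mem_insert_self a F)) (hm a (mem_insert_self a F))
    have hord : ∀ w ∈ F, analyticOrderAt g₁ w = analyticOrderAt f w := fun w hw => by
      rw [show f = (· - a) ^ m a * g₁ from funext hfg₁,
        analyticOrderAt_mul (by fun_prop) (hg₁ w (hFs (mem_insert_of_mem hw))),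
        analyticOrderAt_pow (by fun_prop),
        analyticOrderAt_id_sub_const_of_ne (ne_of_mem_of_not_mem hw haF), smul_zero, zero_add]
    obtain ⟨g, hg, hg₁g⟩ := ih hg₁ (fun w hw => hFs (mem_insert_of_mem hw))
      (fun w hw => hord w hw ▸ hm w (mem_insert_of_mem hw))
    exact ⟨g, hg, fun z => by rw [hfg₁, hg₁g, prod_insert haF, mul_assoc]⟩

theorem apply_ne_zero_of_eq_prod_mul {g : 𝕜 → 𝕜} {F : Finset 𝕜} {m : 𝕜 → ℕ} {a : 𝕜}
    (ha : a ∈ F) (hg : AnalyticAt 𝕜 g a) (hfg : ∀ z, f z = (∏ w ∈ F, (z - w) ^ m w) * g z)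
    (hord : analyticOrderAt f a = m a) : g a ≠ 0 := by
  classical
  set q := fun z => (∏ w ∈ F.erase a, (z - w) ^ m w) * g z
  have hq : AnalyticAt 𝕜 q a := (Finset.analyticAt_fun_prod _ fun w _ => by fun_prop).mul hg
  have hfq : f = (· - a) ^ m a * q := funext fun z => by
    simp only [hfg, ← mul_prod_erase F _ ha, Pi.mul_apply, Pi.pow_apply, q, mul_assoc]
  rw [hfq, analyticOrderAt_mul (by fun_prop) hq, analyticOrderAt_centeredMonomial] at hord
  have hq0 : q a ≠ 0 := hq.analyticOrderAt_eq_zero.1 (by simpa using hord)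
  exact right_ne_zero_of_mul hq0

theorem AnalyticOnNhd.exists_eq_prod_mul_ne_zero (hf : AnalyticOnNhd 𝕜 f s) {Z : Finset 𝕜}
    {t : Set 𝕜} (hZs : ↑Z ⊆ s) (hts : t ⊆ s) (hZ : ∀ w ∈ Z, analyticOrderAt f w ≠ ⊤)
    (hzeros : ∀ z ∈ t, f z = 0 → z ∈ Z) :
    ∃ g, AnalyticOnNhd 𝕜 g s ∧ (∀ z, f z = (∏ w ∈ Z, (z - w) ^ analyticOrderNatAt f w) * g z) ∧
      ∀ z ∈ t, g z ≠ 0 := by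
  obtain ⟨g, hg, hfg⟩ := hf.exists_eq_prod_mul Z hZs (analyticOrderNatAt f)
    fun w _ => ENat.natCast_toNat_le_self _
  refine ⟨g, hg, hfg, fun z hz hgz => ?_⟩
  by_cases hfz : f z = 0
  · have hzZ := hzeros z hz hfz
    exact apply_ne_zero_of_eq_prod_mul hzZ (hg z (hts hz)) hfg
      (Nat.cast_analyticOrderNatAt (hZ z hzZ)).symm hgz
  · exact hfz (by rw [hfg, hgz, mul_zero])

theorem analyticOrderAt_ne_top_of_finite_zeros {x : 𝕜} (hs : s ∈ 𝓝 x)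
    (hfin : {z ∈ s | f z = 0}.Finite) : analyticOrderAt f x ≠ ⊤ := fun htop =>
  infinite_of_mem_nhds x (inter_mem hs (analyticOrderAt_eq_top.1 htop)) hfin

end Factorization

theorem iteratedDeriv_conj_conj {f : ℂ → ℂ} (n : ℕ) :
    iteratedDeriv n (conj ∘ f ∘ conj) = conj ∘ iteratedDeriv n f ∘ conj := by
  induction n with
  | zero => simp
  | succ n ih => rw [iteratedDeriv_succ, iteratedDeriv_succ, ih, deriv_conj_conj]

theorem analyticOrderAt_conj_of_conj_comm {f : ℂ → ℂ} (hf : ∀ z, f (conj z) = conj (f z))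
    {w : ℂ} (hw : AnalyticAt ℂ f w) (hw' : AnalyticAt ℂ f (conj w)) :
    analyticOrderAt f (conj w) = analyticOrderAt f w := by
  have hf' : conj ∘ f ∘ conj = f := funext fun z => by simp [hf]
  have hder (n : ℕ) : iteratedDeriv n f (conj w) = conj (iteratedDeriv n f w) := by
    conv_lhs => rw [← hf', iteratedDeriv_conj_conj]
    simp
  refine ENat.eq_of_forall_natCast_le_iff fun n => ?_
  simp only [natCast_le_analyticOrderAt_iff_iteratedDeriv_eq_zero hw,
    natCast_le_analyticOrderAt_iff_iteratedDeriv_eq_zero hw', hder, map_eq_zero]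

section ConjInvariant

variable {F : Finset ℂ} {m : ℂ → ℕ} {f : ℂ → ℂ}

theorem conj_prod_pow_of_conj_invariant (hF : ∀ w ∈ F, conj w ∈ F)
    (hm : ∀ w ∈ F, m (conj w) = m w) (hf : ∀ w, f (conj w) = conj (f w)) :
    conj (∏ w ∈ F, f w ^ m w) = ∏ w ∈ F, f w ^ m w := by
  rw [map_prod]
  exact prod_nbij' conj conj hF hF (fun w _ => conj_conj w) (fun w _ => conj_conj w)
    (fun w hw => by rw [map_pow, ← hf, hm w hw])

theorem prod_pow_pos_of_conj_invariant (hF : ∀ w ∈ F, conj w ∈ F)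
    (hm : ∀ w ∈ F, m (conj w) = m w) (hf : ∀ w, f (conj w) = conj (f w))
    (hne : ∀ w ∈ F, f w ≠ 0) (hpos : ∀ w ∈ F, w.im = 0 → 0 < f w) :
    0 < ∏ w ∈ F, f w ^ m w := by
  classical
  set Q := ∏ w ∈ F with 0 < w.im, f w ^ m w
  have hlower : ∏ w ∈ F with w.im < 0, f w ^ m w = conj Q := by
    rw [map_prod]
    refine prod_nbij' conj conj (fun w hw => ?_) (fun w hw => ?_) (fun w _ => conj_conj w)
      (fun w _ => conj_conj w) (fun w hw => ?_)
    · simp_all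
    · simp_all
    · rw [map_pow, ← hf, conj_conj, hm w (mem_filter.1 hw).1]
  have hsplit : ∏ w ∈ F, f w ^ m w = (∏ w ∈ F with w.im = 0, f w ^ m w) * (Q * conj Q) := by
    rw [← hlower, ← prod_filter_mul_prod_filter_not F (fun w => w.im = 0),
      ← prod_filter_mul_prod_filter_not (F.filter fun w => ¬w.im = 0) (fun w => 0 < w.im),
      filter_filter, filter_filter]
    congr 3 <;> ext w <;> simp only [mem_filter] <;> grind
  have hQ : Q ≠ 0 := prod_ne_zero_iff.2 fun w hw => pow_ne_zero _ (hne w (mem_filter.1 hw).1)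
  rw [hsplit, mul_conj]
  refine mul_pos (prod_pos fun w hw => ?_) (by exact_mod_cast normSq_pos.2 hQ)
  exact pow_pos (hpos w (mem_filter.1 hw).1 (mem_filter.1 hw).2) _

theorem prod_mul_sub_pow_pos {R : ℝ} (hF : ∀ w ∈ F, conj w ∈ F)
    (hm : ∀ w ∈ F, m (conj w) = m w) (hFre : ∀ w ∈ F, 0 < w.re) (hFR : ∀ w ∈ F, w.re < R) :
    0 < ∏ w ∈ F, (w * (R - w)) ^ m w := by
  refine prod_pow_pos_of_conj_invariant hF hm (fun w => by simp) (fun w hw => ?_) ?_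
  · refine mul_ne_zero (fun h => by simpa [h] using hFre w hw) (fun h => ?_)
    have := congrArg re h
    simp only [sub_re, ofReal_re, zero_re] at this
    linarith [hFR w hw]
  · intro w hw him
    obtain ⟨x, rfl⟩ : ∃ x : ℝ, w = x := ⟨w.re, Complex.ext rfl (by simp [him])⟩
    have := mul_pos (hFre _ hw) (sub_pos.2 (hFR _ hw))
    simp only [ofReal_re] at this
    exact_mod_cast this

end ConjInvariant

theorem im_eq_zero_of_eq_mul {f p g : ℂ → ℂ} {t : ℝ} (hg : ContinuousAt g t)
    (hf : ∀ s : ℝ, (f s).im = 0) (hp : ∀ s : ℝ, (p s).im = 0)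
    (hfin : {s : ℝ | p s = 0}.Finite) (hfpg : ∀ s : ℝ, f s = p s * g s) : (g t).im = 0 := by
  have hcont : ContinuousAt (fun s : ℝ => (g s).im) t :=
    continuous_im.continuousAt.comp (hg.comp continuous_ofReal.continuousAt)
  have hev : ∀ᶠ s : ℝ in 𝓝[≠] t, (g s).im = 0 := by
    filter_upwards [nhdsNE_le_cofinite t hfin.compl_mem_cofinite] with s hs
    have hre : (p s).re ≠ 0 := fun h => hs (Complex.ext h (hp s))
    have him := congrArg im (hfpg s)
    simp only [mul_im, hf s, hp s, zero_mul, add_zero] at him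
    exact (mul_eq_zero.1 him.symm).resolve_left hre
  exact tendsto_nhds_unique (hcont.tendsto.mono_left nhdsWithin_le_nhds)
    (tendsto_const_nhds.congr' (hev.mono fun _ h => h.symm))

theorem mul_pos_of_im_eq_zero {g : ℂ → ℂ} {a b : ℝ} (hab : a ≤ b)
    (hg : ∀ t ∈ Set.Icc a b, ContinuousAt g t) (hreal : ∀ t ∈ Set.Icc a b, (g t).im = 0)
    (hne : ∀ t ∈ Set.Icc a b, g t ≠ 0) : 0 < g a * g b := by
  have hgre : ∀ t ∈ Set.Icc a b, g t = ((g t).re : ℂ) := fun t ht =>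
    Complex.ext rfl (by simp [hreal t ht])
  rw [hgre a (Set.left_mem_Icc.2 hab), hgre b (Set.right_mem_Icc.2 hab), ← ofReal_mul,
    zero_lt_real]
  by_contra! h
  have h0 : (0 : ℝ) ∈ Set.uIcc (g a).re (g b).re := by
    rw [Set.mem_uIcc]
    rcases mul_nonpos_iff.1 h with h | h
    · exact Or.inr ⟨h.2, h.1⟩
    · exact Or.inl h
  have hcont : ContinuousOn (fun t : ℝ => (g t).re) (Set.uIcc a b) := fun t ht =>
    (continuous_re.continuousAt.comp ((hg t (Set.uIcc_of_le hab ▸ ht)).comp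
      continuous_ofReal.continuousAt)).continuousWithinAt
  obtain ⟨c, hc, hc0⟩ := intermediate_value_uIcc hcont h0
  rw [Set.uIcc_of_le hab] at hc
  exact hne c hc (by rw [hgre c hc, show (g c).re = 0 from hc0, ofReal_zero])

theorem prod_zero_sub_pow_mul_prod_sub_pow (F : Finset ℂ) (m : ℂ → ℕ) (R : ℂ) :
    (∏ w ∈ F, (0 - w) ^ m w) * ∏ w ∈ F, (R - w) ^ m w =
      (-1) ^ (∑ w ∈ F, m w) * ∏ w ∈ F, (w * (R - w)) ^ m w := by
  rw [← prod_pow_eq_pow_sum, ← prod_mul_distrib, ← prod_mul_distrib]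
  refine prod_congr rfl fun w _ => ?_
  rw [← mul_pow, ← mul_pow]
  ring

theorem even_sum_of_eq_mul_prod_mul {F : Finset ℂ} {m : ℂ → ℕ} {D g : ℂ → ℂ}
    (hF : ∀ w ∈ F, conj w ∈ F) (hm : ∀ w ∈ F, m (conj w) = m w) (hFre : ∀ w ∈ F, 0 < w.re)
    (hDg : ∀ z, D z = z * ((∏ w ∈ F, (z - w) ^ m w) * g z)) (hDreal : ∀ t : ℝ, (D t).im = 0)
    (hg : ∀ t : ℝ, 0 ≤ t → DifferentiableAt ℂ g t) (hgne : ∀ t : ℝ, 0 ≤ t → g t ≠ 0)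
    (hsgn : ∃ R₁ : ℝ, ∀ R : ℝ, R₁ ≤ R → 0 < (deriv D 0 * D R).re) :
    Even (∑ w ∈ F, m w) := by
  set P : ℂ → ℂ := fun z => ∏ w ∈ F, (z - w) ^ m w
  replace hDg : ∀ z, D z = z * (P z * g z) := hDg
  have hPreal (t : ℝ) : (P t).im = 0 :=
    conj_eq_iff_im.1 (conj_prod_pow_of_conj_invariant hF hm fun w => by simp)
  have hgreal (t : ℝ) (ht : 0 ≤ t) : (g t).im = 0 := by
    refine im_eq_zero_of_eq_mul (p := fun z => z * P z) (hg t ht).continuousAt hDreal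
      (fun s => by simp [hPreal]) ?_ fun s => by rw [hDg, mul_assoc]
    refine ((F.finite_toSet.insert 0).preimage ofReal_injective.injOn).subset fun s hs => ?_
    rcases mul_eq_zero.1 hs with h | h
    · exact Or.inl h
    · obtain ⟨w, hw, hpow⟩ := prod_eq_zero_iff.1 h
      exact Or.inr (sub_eq_zero.1 (pow_eq_zero_iff'.1 hpow).1 ▸ hw)
  have hderiv : deriv D 0 = P 0 * g 0 := by
    have hPg : DifferentiableAt ℂ (fun z => P z * g z) 0 :=
      (by fun_prop : DifferentiableAt ℂ P 0).mul (by simpa using hg 0 le_rfl)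
    rw [show D = fun z => z * (P z * g z) from funext hDg,
      ((hasDerivAt_id' 0).fun_mul hPg.hasDerivAt).deriv]
    simp
  obtain ⟨R₁, hR₁⟩ := hsgn
  obtain ⟨R, hR₁R, hR, hFR⟩ : ∃ R : ℝ, R₁ ≤ R ∧ 0 < R ∧ ∀ w ∈ F, w.re < R :=
    ((eventually_ge_atTop R₁).and ((eventually_gt_atTop 0).and
      (F.eventually_all.2 fun w _ => eventually_gt_atTop w.re))).exists
  have hg0R : 0 < g 0 * g R := by
    simpa using mul_pos_of_im_eq_zero hR.le (fun t ht => (hg t ht.1).continuousAt)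
      (fun t ht => hgreal t ht.1) (fun t ht => hgne t ht.1)
  have hPP := prod_mul_sub_pow_pos hF hm hFre hFR
  have key : deriv D 0 * D R =
      (-1) ^ (∑ w ∈ F, m w) * (R * ((∏ w ∈ F, (w * (R - w)) ^ m w) * (g 0 * g R))) := by
    rw [hderiv, hDg]
    linear_combination (R * g 0 * g R) * prod_zero_sub_pow_mul_prod_sub_pow F m R
  rcases Nat.even_or_odd (∑ w ∈ F, m w) with h | h
  · exact h
  have hpos := pos_iff.1 (mul_pos (zero_lt_real.2 hR) (mul_pos hPP hg0R))
  have := hR₁ R hR₁R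
  rw [key, h.neg_one_pow, neg_one_mul, neg_re] at this
  linarith [hpos.1]

theorem mem_insert_zero_of_apply_eq_zero {D : ℂ → ℂ} {F : Finset ℂ}
    (hF : ∀ z, 0 < z.re → D z = 0 → z ∈ F) (himag : ∀ t : ℝ, t ≠ 0 → D (I * t) ≠ 0) {z : ℂ}
    (hz : 0 ≤ z.re) (hDz : D z = 0) : z ∈ insert 0 F := by
  rcases hz.lt_or_eq with hz | hz
  · exact mem_insert_of_mem (hF z hz hDz)
  · refine mem_insert.2 (Or.inl ?_)
    by_contra hz0
    refine himag z.im (fun him => hz0 (Complex.ext hz.symm him)) ?_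
    rwa [show I * (z.im : ℂ) = z from Complex.ext (by simp [← hz]) (by simp)]

theorem stmt_15_general (Ω : Set ℂ)
    (hsub : {z : ℂ | 0 ≤ z.re} ⊆ Ω)
    (D : ℂ → ℂ) (hD : AnalyticOnNhd ℂ D Ω)
    (hsym : ∀ z : ℂ, D (starRingEnd ℂ z) = starRingEnd ℂ (D z))
    (hfin : {z : ℂ | 0 < z.re ∧ D z = 0}.Finite)
    (h0 : D 0 = 0) (h0' : deriv D 0 ≠ 0)
    (himag : ∀ t : ℝ, t ≠ 0 → D (Complex.I * t) ≠ 0)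
    (hsgn : ∃ R₁ : ℝ, ∀ R : ℝ, R₁ ≤ R → 0 < (deriv D 0 * D (R : ℂ)).re) :
    Even (∑ z ∈ hfin.toFinset.attach,
      ((analyticOrderAt D z.1).toNat)) := by
  classical
  set F := hfin.toFinset
  have hF {w : ℂ} : w ∈ F ↔ 0 < w.re ∧ D w = 0 := hfin.mem_toFinset
  have hΩ {z : ℂ} (hz : 0 ≤ z.re) : z ∈ Ω := hsub hz
  have hord0 : analyticOrderAt D 0 = 1 :=
    (hD 0 (hΩ le_rfl)).analyticOrderAt_eq_one_of_zero_deriv_ne_zero h0 h0'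
  have hZ : ∀ w ∈ insert 0 F, analyticOrderAt D w ≠ ⊤ := by
    intro w hw
    rcases mem_insert.1 hw with rfl | hw
    · simp [hord0]
    · exact analyticOrderAt_ne_top_of_finite_zeros
        ((isOpen_lt continuous_const continuous_re).mem_nhds (hF.1 hw).1) hfin
  have hZre : ∀ w ∈ insert 0 F, 0 ≤ w.re := by
    intro w hw
    rcases mem_insert.1 hw with rfl | hw
    exacts [le_rfl, (hF.1 hw).1.le]
  obtain ⟨g, hg, hDg, hgne⟩ := hD.exists_eq_prod_mul_ne_zero (fun w hw => hΩ (hZre w hw)) hsub hZ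
    fun z hz hDz => mem_insert_zero_of_apply_eq_zero (fun w hw hDw => hF.2 ⟨hw, hDw⟩) himag hz hDz
  have hconj {w : ℂ} (hw : w ∈ F) : conj w ∈ F :=
    hF.2 ⟨by simpa using (hF.1 hw).1, by rw [hsym, (hF.1 hw).2, map_zero]⟩
  have hsum : ∑ z ∈ F.attach, (analyticOrderAt D z.1).toNat = ∑ w ∈ F, analyticOrderNatAt D w :=
    sum_attach F (analyticOrderNatAt D)
  rw [hsum]
  refine even_sum_of_eq_mul_prod_mul (fun w => hconj) (fun w hw => ?_) (fun w hw => (hF.1 hw).1)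
    (fun z => ?_) (fun t => ?_) (fun t ht => ?_) (fun t ht => hgne _ (by simpa using ht)) hsgn
  · exact congrArg ENat.toNat (analyticOrderAt_conj_of_conj_comm hsym
      (hD w (hΩ (hF.1 hw).1.le)) (hD _ (hΩ (hF.1 (hconj hw)).1.le)))
  · have hm0 : analyticOrderNatAt D 0 = 1 := by simp [analyticOrderNatAt, hord0]
    rw [hDg, prod_insert fun h => (hF.1 h).1.ne rfl, hm0, sub_zero, pow_one, mul_assoc]
  · exact conj_eq_iff_im.1 (by rw [← hsym, conj_ofReal])
  · exact (hg t (hΩ (by simpa using ht))).differentiableAt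

/-- Parity argument for the stability index: let `D` be analytic on an open connected
set `Ω` containing the closed right half-plane, with conjugate symmetry, finitely many
zeros in the open right half-plane, no zeros for large real `λ`, a simple zero at `0`,
no other zeros on the imaginary axis; if `D'(0)·D(R) > 0` for all large real `R`, then
the number of zeros of `D` in `{Re λ > 0}`, counted with multiplicity, is even. -/
theorem stmt_15 (Ω : Set ℂ) (hΩo : IsOpen Ω) (hΩc : IsConnected Ω)
    (hsub : {z : ℂ | 0 ≤ z.re} ⊆ Ω)
    (D : ℂ → ℂ) (hD : AnalyticOnNhd ℂ D Ω)
    (hsym : ∀ z : ℂ, D (starRingEnd ℂ z) = starRingEnd ℂ (D z))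
    (hfin : {z : ℂ | 0 < z.re ∧ D z = 0}.Finite)
    (R₀ : ℝ) (hR₀ : ∀ R : ℝ, R₀ ≤ R → D (R : ℂ) ≠ 0)
    (h0 : D 0 = 0) (h0' : deriv D 0 ≠ 0)
    (himag : ∀ t : ℝ, t ≠ 0 → D (Complex.I * t) ≠ 0)
    (hsgn : ∃ R₁ : ℝ, ∀ R : ℝ, R₁ ≤ R → 0 < (deriv D 0 * D (R : ℂ)).re) :
    Even (∑ z ∈ hfin.toFinset.attach,
      ((analyticOrderAt D z.1).toNat)) :=
  stmt_15_general Ω hsub D hD hsym hfin h0 h0' himag hsgn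
end
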